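/- arXiv:1506.05819 — 6 statements merged into one kernel-verified Lean document; each statement's English description precedes it below -/
import Mathlib

section
/- Let $0 < p < 1$ and let $m \ge 1$ be an integer. Let $Z_1, Z_2$ be independent random variables, each negative binomial with $m$ successes and failure probability $p$ (i.e. $\Pr(Z = k) = \binom{k-1}{m-1} p^{k-m}(1-p)^m$ for $k \ge m$). Then $\sum_{k=m}^{\infty} p^{-k} \, \Pr(\min(Z_1, Z_2) = k) < 2 (4/p)^m$. -/
/-!
Write `T n = Pr(Z > n)`, so that `Pr(min(Z₁, Z₂) = n) = T (n-1)² - T n² = Pr(Z = n) (T (n-1) + T n)`,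
which is at most `2 Pr(Z = n) T (n-1)`. With `s = p^(-1/2)`, Markov's inequality for `s^Z` gives
`s^n T (n-1) ≤ E[s^Z]`, hence `p^(-n) Pr(min = n) ≤ 2 s^n Pr(Z = n) E[s^Z]`, and summing over `n`
bounds the series by `2 E[s^Z]² = 2 ((1 + √p)² / p)^m < 2 (4/p)^m`.
-/

/-- The negative binomial pmf: number of trials until the `m`-th success,
failure probability `p`. -/
noncomputable def nbPMF (m : ℕ) (p : ℝ) (k : ℕ) : ℝ :=
  ((k - 1).choose (m - 1) : ℝ) * p ^ (k - m) * (1 - p) ^ m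

/-- Tail of the negative binomial distribution: `Pr(X > x)`. -/
noncomputable def nbTail (m : ℕ) (p : ℝ) (x : ℕ) : ℝ := ∑' j : ℕ, nbPMF m p (x + 1 + j)

open Finset

noncomputable def tailSum (f : ℕ → ℝ) (x : ℕ) : ℝ := ∑' j, f (x + 1 + j)

section TailSum

variable {f : ℕ → ℝ} {s : ℝ}

theorem tailSum_nonneg (hf : ∀ n, 0 ≤ f n) (x : ℕ) : 0 ≤ tailSum f x :=
  tsum_nonneg fun _ => hf _

theorem tailSum_eq_add (hf : Summable f) (x : ℕ) :
    tailSum f x = f (x + 1) + tailSum f (x + 1) := by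
  rw [tailSum, Summable.tsum_eq_zero_add (f := fun j => f (x + 1 + j))
    (hf.comp_injective (add_right_injective (x + 1))), tailSum]
  exact congrArg₂ _ rfl (tsum_congr fun j => congrArg f (by omega))

theorem tailSum_succ_le (hf : ∀ n, 0 ≤ f n) (hsum : Summable f) (x : ℕ) :
    tailSum f (x + 1) ≤ tailSum f x := by
  rw [tailSum_eq_add hsum x]
  linarith [hf (x + 1)]

theorem sq_tailSum_sub_sq_nonneg (hf : ∀ n, 0 ≤ f n) (hsum : Summable f) (x : ℕ) :
    0 ≤ tailSum f x ^ 2 - tailSum f (x + 1) ^ 2 :=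
  sub_nonneg.2 (pow_le_pow_left₀ (tailSum_nonneg hf _) (tailSum_succ_le hf hsum x) 2)

theorem summable_of_summable_pow_mul (hf : ∀ n, 0 ≤ f n) (hs : 1 ≤ s)
    (hsum : Summable fun n => s ^ (n + 1) * f (n + 1)) : Summable f :=
  (summable_nat_add_iff 1).1 <|
    hsum.of_nonneg_of_le (fun _ => hf _) fun _ => le_mul_of_one_le_left (hf _) (one_le_pow₀ hs)

theorem tsum_comp_add_le_tsum {g : ℕ → ℝ} (hg : ∀ n, 0 ≤ g n) (hsum : Summable g) (x : ℕ) :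
    ∑' j, g (x + j) ≤ ∑' n, g n :=
  tsum_comp_le_tsum_of_inj hsum hg (add_right_injective x)

/-- Markov's inequality for the weight `n ↦ s ^ n`. -/
theorem pow_mul_tailSum_le (hf : ∀ n, 0 ≤ f n) (hs : 1 ≤ s)
    (hsum : Summable fun n => s ^ (n + 1) * f (n + 1)) (x : ℕ) :
    s ^ (x + 1) * tailSum f x ≤ ∑' n, s ^ (n + 1) * f (n + 1) := by
  have hf1 := summable_of_summable_pow_mul hf hs hsum
  calc s ^ (x + 1) * tailSum f x = ∑' j, s ^ (x + 1) * f (x + 1 + j) := tsum_mul_left.symm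
    _ ≤ ∑' j, s ^ (x + j + 1) * f (x + j + 1) := by
        refine Summable.tsum_le_tsum (fun j => ?_)
          ((hf1.comp_injective (add_right_injective (x + 1))).mul_left _)
          (hsum.comp_injective (add_right_injective x))
        rw [add_right_comm]
        exact mul_le_mul_of_nonneg_right (pow_le_pow_right₀ hs (by omega)) (hf _)
    _ ≤ ∑' n, s ^ (n + 1) * f (n + 1) :=
        tsum_comp_add_le_tsum (fun n => mul_nonneg (pow_nonneg (zero_le_one.trans hs) _) (hf _))
          hsum x

theorem pow_mul_sq_tailSum_sub_sq_le (hf : ∀ n, 0 ≤ f n) (hs : 1 ≤ s)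
    (hsum : Summable fun n => s ^ (n + 1) * f (n + 1)) (x : ℕ) :
    (s ^ 2) ^ (x + 1) * (tailSum f x ^ 2 - tailSum f (x + 1) ^ 2) ≤
      2 * (s ^ (x + 1) * f (x + 1)) * ∑' n, s ^ (n + 1) * f (n + 1) := by
  have hf1 := summable_of_summable_pow_mul hf hs hsum
  have hfx := hf (x + 1)
  have hsx := pow_nonneg (zero_le_one.trans hs) (x + 1)
  calc (s ^ 2) ^ (x + 1) * (tailSum f x ^ 2 - tailSum f (x + 1) ^ 2)
      = (s ^ 2) ^ (x + 1) * (f (x + 1) * (tailSum f x + tailSum f (x + 1))) := by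
        rw [tailSum_eq_add hf1 x]; ring
    _ ≤ (s ^ 2) ^ (x + 1) * (f (x + 1) * (2 * tailSum f x)) := by
        gcongr
        linarith [tailSum_succ_le hf hf1 x]
    _ = 2 * (s ^ (x + 1) * f (x + 1)) * (s ^ (x + 1) * tailSum f x) := by ring
    _ ≤ 2 * (s ^ (x + 1) * f (x + 1)) * ∑' n, s ^ (n + 1) * f (n + 1) := by
        gcongr
        exact pow_mul_tailSum_le hf hs hsum x

theorem tsum_pow_mul_sq_tailSum_sub_sq_le (hf : ∀ n, 0 ≤ f n) (hs : 1 ≤ s)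
    (hsum : Summable fun n => s ^ (n + 1) * f (n + 1)) (m : ℕ) :
    ∑' k, (s ^ 2) ^ (m + k + 1) * (tailSum f (m + k) ^ 2 - tailSum f (m + k + 1) ^ 2) ≤
      2 * (∑' n, s ^ (n + 1) * f (n + 1)) ^ 2 := by
  set S := ∑' n, s ^ (n + 1) * f (n + 1)
  have hg0 : ∀ n, 0 ≤ s ^ (n + 1) * f (n + 1) :=
    fun n => mul_nonneg (pow_nonneg (zero_le_one.trans hs) _) (hf _)
  have hbound := fun k => pow_mul_sq_tailSum_sub_sq_le hf hs hsum (m + k)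
  have hsum' : Summable fun k => 2 * (s ^ (m + k + 1) * f (m + k + 1)) * S :=
    ((hsum.comp_injective (add_right_injective m)).mul_left 2).mul_right S
  calc _ ≤ ∑' k, 2 * (s ^ (m + k + 1) * f (m + k + 1)) * S := by
        refine Summable.tsum_le_tsum hbound (hsum'.of_nonneg_of_le (fun k => ?_) hbound) hsum'
        exact mul_nonneg (by positivity)
          (sq_tailSum_sub_sq_nonneg hf (summable_of_summable_pow_mul hf hs hsum) _)
    _ = 2 * (∑' k, s ^ (m + k + 1) * f (m + k + 1)) * S := by
        rw [tsum_mul_right, tsum_mul_left]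
    _ ≤ 2 * S * S := by
        gcongr
        · exact tsum_nonneg hg0
        · exact tsum_comp_add_le_tsum hg0 hsum m
    _ = 2 * S ^ 2 := by ring

end TailSum

theorem nbPMF_nonneg {m : ℕ} {p : ℝ} (hp : 0 ≤ p) (hp1 : p ≤ 1) (k : ℕ) : 0 ≤ nbPMF m p k := by
  have : 0 ≤ 1 - p := by linarith
  unfold nbPMF; positivity

/-- Indexed from `1` because `nbPMF 1 p 0 = 1 - p` is a junk value of the truncated subtractions. -/
theorem hasSum_pow_mul_nbPMF_succ {p s : ℝ} (hps : |p * s| < 1) (r : ℕ) :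
    HasSum (fun n => s ^ (n + 1) * nbPMF (r + 1) p (n + 1))
      (((1 - p) * s / (1 - p * s)) ^ (r + 1)) := by
  have hzero : ∑ i ∈ range r, s ^ (i + 1) * nbPMF (r + 1) p (i + 1) = 0 :=
    sum_eq_zero fun i hi => by
      rw [nbPMF, Nat.choose_eq_zero_of_lt (by simp at hi; omega)]; simp
  rw [← hasSum_nat_add_iff' r, hzero, sub_zero,
    show ((1 - p) * s / (1 - p * s)) ^ (r + 1) = ((1 - p) * s) ^ (r + 1) * (1 / (1 - p * s) ^ (r + 1))
      by rw [div_pow, mul_one_div]]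
  refine ((hasSum_choose_mul_geometric_of_norm_lt_one r (r := p * s) (by rwa [Real.norm_eq_abs])).mul_left _).congr_fun fun n => ?_
  rw [nbPMF, show n + r + 1 - 1 = n + r by omega, show n + r + 1 - (r + 1) = n by omega,
    show r + 1 - 1 = r by omega, mul_pow]
  ring

/-- For `Z₁, Z₂` i.i.d. `NB(m,p)`, `Pr(min(Z₁,Z₂) = k) = tail(k-1)² - tail(k)²`, and
`∑_{k=m}^∞ p^{-k} Pr(min(Z₁,Z₂) = k) < 2 (4/p)^m`. -/
theorem claim_min_pgf_bound (p : ℝ) (hp : 0 < p) (hp1 : p < 1) (m : ℕ) (hm : 1 ≤ m) :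
    ∑' k : ℕ, (1 / p) ^ (m + k) *
        ((nbTail m p (m + k - 1)) ^ 2 - (nbTail m p (m + k)) ^ 2) <
      2 * (4 / p) ^ m := by
  obtain ⟨r, rfl⟩ : ∃ r, m = r + 1 := ⟨m - 1, by omega⟩
  set q := Real.sqrt p
  have hq : 0 < q := Real.sqrt_pos.2 hp
  have hqp : q ^ 2 = p := Real.sq_sqrt hp.le
  have hq1 : q < 1 := by nlinarith
  have hpgf := hasSum_pow_mul_nbPMF_succ (p := p) (s := 1 / q)
    (by rw [← hqp, abs_lt]; constructor <;> field_simp <;> linarith) r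
  have hpgf_eq : (1 - p) * (1 / q) / (1 - p * (1 / q)) = (1 + q) / q := by
    have : 1 - q ≠ 0 := by linarith
    rw [← hqp]; field_simp; ring
  have hbound := tsum_pow_mul_sq_tailSum_sub_sq_le (fun n => nbPMF_nonneg hp.le hp1.le n)
    (by rw [le_div_iff₀ hq]; linarith) hpgf.summable r
  rw [hpgf.tsum_eq, hpgf_eq, one_div_pow, hqp] at hbound
  calc _ = ∑' k, (1 / p) ^ (r + k + 1) * (tailSum (nbPMF (r + 1) p) (r + k) ^ 2 -
          tailSum (nbPMF (r + 1) p) (r + k + 1) ^ 2) :=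
        tsum_congr fun k => by rw [show r + 1 + k - 1 = r + k by omega, add_right_comm]; rfl
    _ ≤ 2 * (((1 + q) / q) ^ (r + 1)) ^ 2 := hbound
    _ < 2 * (4 / p) ^ (r + 1) := by
        rw [pow_right_comm, div_pow, hqp]
        gcongr
        nlinarith
end

section
/- Let $0 < p < 1$ and define $g_p(\alpha) = 2\, \frac{\alpha^{\alpha}}{(\alpha-1)^{\alpha-1}}\, p^{\alpha-1}(1-p) - 1$ for real $\alpha > 1$. Then there exists exactly one $\alpha_p > \frac{1}{1-p}$ with $g_p(\alpha_p) = 0$. -/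
/-!
Write `g_p + 1 = exp L` with `L = gfunLog p`,
`L(α) = log (2 (1 - p)) + α log α - (α - 1) log (α - 1) + (α - 1) log p`.
Then `L'(α) = log (α p / (α - 1))`, which is negative exactly when `α > 1/(1-p)`, so `L` is
strictly decreasing on `[1/(1-p), ∞)`. At `α = 1/(1-p)` one finds `L = log 2 > 0`, and since
`α log α - (α - 1) log (α - 1) ≤ log α + 1`, `L` tends to `-∞`. Hence `L`, and with it `g_p`,
has exactly one zero beyond `1/(1-p)`.
-/

/-- `g_p(α) = 2 α^α / (α-1)^(α-1) · p^(α-1) (1-p) - 1`, with real powers. -/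
noncomputable def gfun (p α : ℝ) : ℝ :=
  2 * (α ^ α / (α - 1) ^ (α - 1)) * p ^ (α - 1) * (1 - p) - 1

open Real Set Filter Topology

theorem existsUnique_zero_of_strictAntiOn_Ici {f : ℝ → ℝ} {a : ℝ}
    (hcont : ContinuousOn f (Ici a)) (hanti : StrictAntiOn f (Ici a)) (ha : 0 < f a)
    (hbot : Tendsto f atTop atBot) : ∃! x, a < x ∧ f x = 0 := by
  obtain ⟨b, hfb, hab⟩ :=
    ((hbot.eventually (eventually_lt_atBot 0)).and (eventually_gt_atTop a)).exists
  obtain ⟨x, ⟨hax, -⟩, hfx⟩ :=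
    intermediate_value_Ioo' hab.le (hcont.mono Icc_subset_Ici_self) ⟨hfb, ha⟩
  refine ⟨x, ⟨hax, hfx⟩, fun y ⟨hay, hfy⟩ => ?_⟩
  exact hanti.injOn (mem_Ici.2 hay.le) (mem_Ici.2 hax.le) (hfy.trans hfx.symm)

theorem tendsto_log_add_mul_atBot {c : ℝ} (hc : c < 0) :
    Tendsto (fun x => log x + c * x) atTop atBot := by
  have hlog : Tendsto (fun x => log x / x + c) atTop (𝓝 c) := by
    simpa using isLittleO_log_id_atTop.tendsto_div_nhds_zero.add_const c
  refine (tendsto_id.atTop_mul_neg hc hlog).congr' ?_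
  filter_upwards [eventually_gt_atTop 0] with x hx
  simp only [id_eq]
  field_simp

theorem mul_log_sub_mul_log_sub_one_le {x : ℝ} (hx : 1 < x) :
    x * log x - (x - 1) * log (x - 1) ≤ log x + 1 := by
  have h1 : 0 < x - 1 := by linarith
  have hlog : log x - log (x - 1) ≤ 1 / (x - 1) := by
    have := log_le_sub_one_of_pos (div_pos (by linarith) h1)
    rw [log_div (by linarith) h1.ne'] at this
    calc log x - log (x - 1) ≤ x / (x - 1) - 1 := this
      _ = 1 / (x - 1) := by field_simp; ring
  have := mul_le_mul_of_nonneg_left hlog h1.le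
  rw [mul_one_div_cancel h1.ne'] at this
  linarith

noncomputable def gfunLog (p α : ℝ) : ℝ :=
  log 2 + log (1 - p) + α * log α - (α - 1) * log (α - 1) + (α - 1) * log p

section

variable {p α : ℝ}

theorem gfun_eq_exp_gfunLog_sub_one (hp : 0 < p) (hp1 : p < 1) (hα : 1 < α) :
    gfun p α = exp (gfunLog p α) - 1 := by
  have h0 : 0 < α := by linarith
  have h1 : 0 < α - 1 := by linarith
  rw [gfun, gfunLog, rpow_def_of_pos h0, rpow_def_of_pos h1, rpow_def_of_pos hp]
  simp only [exp_add, exp_sub, exp_log two_pos, exp_log (sub_pos.2 hp1)]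
  ring_nf

theorem hasDerivAt_gfunLog (hα : 1 < α) :
    HasDerivAt (gfunLog p) (log α - log (α - 1) + log p) α := by
  have hα0 : HasDerivAt (fun x => x * log x) (log α + 1) α :=
    hasDerivAt_mul_log (by linarith)
  have hα1 : HasDerivAt (fun x => (x - 1) * log (x - 1)) (log (α - 1) + 1) α :=
    (hasDerivAt_mul_log (by linarith)).comp_sub_const α 1
  have hlin : HasDerivAt (fun x => (x - 1) * log p) (log p) α := by
    simpa using ((hasDerivAt_id α).sub_const 1).mul_const (log p)
  rw [show log α - log (α - 1) + log p = log α + 1 - (log (α - 1) + 1) + log p by ring]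
  exact ((hα0.const_add (log 2 + log (1 - p))).sub hα1).add hlin

theorem continuousOn_gfunLog : ContinuousOn (gfunLog p) (Ioi 1) := fun _ hx =>
  (hasDerivAt_gfunLog hx).continuousAt.continuousWithinAt

theorem one_lt_one_div_one_sub (hp : 0 < p) (hp1 : p < 1) : 1 < 1 / (1 - p) :=
  (one_lt_div (by linarith)).2 (by linarith)

theorem gfunLog_one_div_one_sub (hp : 0 < p) (hp1 : p < 1) :
    gfunLog p (1 / (1 - p)) = log 2 := by
  have h1p : 0 < 1 - p := by linarith
  have hsub : 1 / (1 - p) - 1 = p / (1 - p) := by field_simp; ring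
  rw [gfunLog, hsub, log_div hp.ne' h1p.ne', one_div, log_inv]
  field_simp
  ring

theorem strictAntiOn_gfunLog (hp : 0 < p) (hp1 : p < 1) :
    StrictAntiOn (gfunLog p) (Ici (1 / (1 - p))) := by
  have h1p : 0 < 1 - p := by linarith
  have hsub : Ici (1 / (1 - p)) ⊆ Ioi 1 := Ici_subset_Ioi.2 (one_lt_one_div_one_sub hp hp1)
  refine strictAntiOn_of_deriv_neg (convex_Ici _) (continuousOn_gfunLog.mono hsub) ?_
  intro x hx
  rw [interior_Ici] at hx
  have hx1 : 1 < x := hsub (mem_Ici.2 hx.le)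
  rw [(hasDerivAt_gfunLog hx1).deriv]
  -- `log x - log (x - 1) + log p = log (x p / (x - 1))`
  have hxp : x * p < x - 1 := by
    have := (div_lt_iff₀ h1p).1 hx
    linarith
  have hlog := log_lt_log (mul_pos (by linarith) hp) hxp
  rw [log_mul (by linarith) hp.ne'] at hlog
  linarith

theorem tendsto_gfunLog_atBot (hp : 0 < p) (hp1 : p < 1) :
    Tendsto (gfunLog p) atTop atBot := by
  have hlin := tendsto_atBot_add_const_left atTop (log 2 + log (1 - p) + 1 - log p)
    (tendsto_log_add_mul_atBot (log_neg hp hp1))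
  refine tendsto_atBot_mono' atTop ?_ hlin
  filter_upwards [eventually_gt_atTop 1] with x hx
  have := mul_log_sub_mul_log_sub_one_le hx
  simp only [gfunLog]
  linarith

end

/-- There is exactly one root `α_p > 1/(1-p)` of `g_p`. -/
theorem claim_unique_root (p : ℝ) (hp : 0 < p) (hp1 : p < 1) :
    ∃! α : ℝ, 1 / (1 - p) < α ∧ gfun p α = 0 := by
  have hsub : Ici (1 / (1 - p)) ⊆ Ioi 1 := Ici_subset_Ioi.2 (one_lt_one_div_one_sub hp hp1)
  have hroot : ∀ α, 1 / (1 - p) < α ∧ gfunLog p α = 0 ↔ 1 / (1 - p) < α ∧ gfun p α = 0 :=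
    fun α => and_congr_right fun hα => by
      rw [gfun_eq_exp_gfunLog_sub_one hp hp1 (hsub (mem_Ici.2 hα.le)), sub_eq_zero, exp_eq_one_iff]
  have hpos : 0 < gfunLog p (1 / (1 - p)) := by
    rw [gfunLog_one_div_one_sub hp hp1]
    exact log_pos one_lt_two
  exact (existsUnique_congr hroot).1 <| existsUnique_zero_of_strictAntiOn_Ici
    (continuousOn_gfunLog.mono hsub) (strictAntiOn_gfunLog hp hp1) hpos
    (tendsto_gfunLog_atBot hp hp1)
end

section
/- Let $X$ be a negative binomial random variable with $m$ successes and failure probability $p \in (0,1)$, so $\Pr(X = k) = \binom{k-1}{m-1} p^{k-m}(1-p)^m$ for integers $k \ge m$. Then for any integer $b \ge m$, $\Pr(X > b) = \Pr(X = b+1) \cdot \left(1 + \sum_{k=1}^{\infty} p^k \prod_{j=1}^{k} \frac{b+j}{b - m + 1 + j}\right)$, and the factor in parentheses satisfies $\frac{1}{1-p} \le 1 + \sum_{k=1}^{\infty} p^k \prod_{j=1}^{k} \frac{b+j}{b-m+1+j} \le \frac{1}{1 - p(1 + \frac{m-1}{b-m+1})}$, provided $p(1 + \frac{m-1}{b-m+1})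 < 1$. -/
/-- The hypergeometric series factor of the NB tail:
`1 + ∑_{k=1}^∞ p^k ∏_{j=1}^k (b+j)/(b-m+1+j)`. -/
noncomputable def hgFactor (m b : ℕ) (p : ℝ) : ℝ :=
  1 + ∑' k : ℕ, p ^ (k + 1) *
    ∏ j ∈ Finset.range (k + 1), (((b : ℝ) + (j + 1)) / ((b : ℝ) - m + 1 + (j + 1)))

open Finset

lemma eq_mul_pow_mul_prod_of_succ {M : Type*} [CommMonoid M] {a r : ℕ → M} {p : M}
    (h : ∀ j, a (j + 1) = a j * (p * r j)) (j : ℕ) :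
    a j = a 0 * (p ^ j * ∏ i ∈ range j, r i) := by
  induction j with
  | zero => simp
  | succ j ih => rw [h, ih, prod_range_succ, pow_succ]; ac_rfl

lemma cast_choose_succ_eq_mul_div {K : Type*} [Field K] [CharZero K] {n k : ℕ} (hk : k ≤ n) :
    ((n + 1).choose k : K) = n.choose k * ((n + 1) / (n + 1 - k)) := by
  have hne : (n + 1 - k : K) ≠ 0 := by
    rw [← Nat.cast_add_one, ← Nat.cast_sub (by omega)]
    exact_mod_cast (by omega : n + 1 - k ≠ 0)
  rw [mul_div_assoc', eq_div_iff hne]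
  have h := congrArg (Nat.cast : ℕ → K) (Nat.choose_mul_succ_eq n k)
  push_cast [Nat.cast_sub (by omega : k ≤ n + 1)] at h
  exact h.symm

section ProductSeries

variable {p q : ℝ} {r : ℕ → ℝ}

lemma pow_le_pow_mul_prod (hp : 0 ≤ p) (hr : ∀ i, 1 ≤ r i) (j : ℕ) :
    p ^ j ≤ p ^ j * ∏ i ∈ range j, r i :=
  le_mul_of_one_le_right (pow_nonneg hp j) (one_le_prod fun i _ => hr i)

lemma pow_mul_prod_le_mul_pow (hp : 0 ≤ p) (hr : ∀ i, 0 ≤ r i) (hrq : ∀ i, r i ≤ q) (j : ℕ) :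
    p ^ j * ∏ i ∈ range j, r i ≤ (p * q) ^ j := by
  calc p ^ j * ∏ i ∈ range j, r i ≤ p ^ j * ∏ _i ∈ range j, q :=
        mul_le_mul_of_nonneg_left (prod_le_prod (fun i _ => hr i) fun i _ => hrq i)
          (pow_nonneg hp j)
    _ = (p * q) ^ j := by rw [prod_const, card_range, mul_pow]

lemma summable_pow_mul_prod (hp : 0 ≤ p) (hr : ∀ i, 0 ≤ r i) (hrq : ∀ i, r i ≤ q)
    (hpq : p * q < 1) : Summable fun j => p ^ j * ∏ i ∈ range j, r i :=
  .of_nonneg_of_le (fun j => mul_nonneg (pow_nonneg hp j) (prod_nonneg fun i _ => hr i))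
    (pow_mul_prod_le_mul_pow hp hr hrq)
    (summable_geometric_of_lt_one (mul_nonneg hp ((hr 0).trans (hrq 0))) hpq)

lemma tsum_pow_mul_prod_le (hp : 0 ≤ p) (hr : ∀ i, 0 ≤ r i) (hrq : ∀ i, r i ≤ q)
    (hpq : p * q < 1) : ∑' j, p ^ j * ∏ i ∈ range j, r i ≤ (1 - p * q)⁻¹ := by
  have hpq0 : 0 ≤ p * q := mul_nonneg hp ((hr 0).trans (hrq 0))
  rw [← tsum_geometric_of_lt_one hpq0 hpq]
  exact (summable_pow_mul_prod hp hr hrq hpq).tsum_le_tsum (pow_mul_prod_le_mul_pow hp hr hrq)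
    (summable_geometric_of_lt_one hpq0 hpq)

lemma inv_one_sub_le_tsum_pow_mul_prod (hp : 0 ≤ p) (hr : ∀ i, 1 ≤ r i) (hrq : ∀ i, r i ≤ q)
    (hpq : p * q < 1) : (1 - p)⁻¹ ≤ ∑' j, p ^ j * ∏ i ∈ range j, r i := by
  have hr0 i : 0 ≤ r i := zero_le_one.trans (hr i)
  have hp1 : p < 1 := (le_mul_of_one_le_right hp ((hr 0).trans (hrq 0))).trans_lt hpq
  rw [← tsum_geometric_of_lt_one hp hp1]
  exact (summable_geometric_of_lt_one hp hp1).tsum_le_tsum (pow_le_pow_mul_prod hp hr)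
    (summable_pow_mul_prod hp hr0 hrq hpq)

end ProductSeries

noncomputable def nbRatio (m b j : ℕ) : ℝ := ((b : ℝ) + (j + 1)) / ((b : ℝ) - m + 1 + (j + 1))

section NegativeBinomial

variable {m b : ℕ}

lemma one_le_nbRatio (hm : 1 ≤ m) (hb : m ≤ b) (j : ℕ) : 1 ≤ nbRatio m b j := by
  have hm' : (1 : ℝ) ≤ m := by exact_mod_cast hm
  have hb' : (m : ℝ) ≤ b := by exact_mod_cast hb
  have hj : (0 : ℝ) ≤ j := j.cast_nonneg
  rw [nbRatio, one_le_div (by linarith)]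
  linarith

lemma nbRatio_le (hm : 1 ≤ m) (hb : m ≤ b) (j : ℕ) :
    nbRatio m b j ≤ 1 + ((m : ℝ) - 1) / ((b : ℝ) - m + 1) := by
  have hm' : (1 : ℝ) ≤ m := by exact_mod_cast hm
  have hb' : (m : ℝ) ≤ b := by exact_mod_cast hb
  have hpos : (0 : ℝ) < b - m + 1 := by linarith
  have hrw : nbRatio m b j = 1 + ((m : ℝ) - 1) / ((b : ℝ) - m + 1 + (j + 1)) := by
    rw [nbRatio]
    field_simp
    ring
  have hj : (0 : ℝ) ≤ j := j.cast_nonneg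
  rw [hrw]
  gcongr <;> linarith

lemma nbPMF_succ (hm : 1 ≤ m) (hb : m ≤ b) (p : ℝ) (j : ℕ) :
    nbPMF m p (b + 1 + (j + 1)) = nbPMF m p (b + 1 + j) * (p * nbRatio m b j) := by
  obtain ⟨k, rfl⟩ : ∃ k, m = k + 1 := ⟨m - 1, by omega⟩
  rw [nbPMF, nbPMF, show b + 1 + (j + 1) - 1 = b + j + 1 by omega,
    show b + 1 + j - 1 = b + j by omega, show b + 1 + (j + 1) - (k + 1) = b + j - k + 1 by omega,
    show b + 1 + j - (k + 1) = b + j - k by omega, Nat.add_sub_cancel,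
    cast_choose_succ_eq_mul_div (by omega), nbRatio, pow_succ]
  push_cast
  ring_nf

lemma nbTail_eq_mul_tsum (hm : 1 ≤ m) (hb : m ≤ b) (p : ℝ) :
    nbTail m p b = nbPMF m p (b + 1) * ∑' j, p ^ j * ∏ i ∈ range j, nbRatio m b i := by
  have h j := eq_mul_pow_mul_prod_of_succ (a := fun j => nbPMF m p (b + 1 + j))
    (nbPMF_succ hm hb p) j
  simp only [add_zero] at h
  rw [nbTail, tsum_congr h, tsum_mul_left]

lemma hgFactor_eq_tsum {p : ℝ} (h : Summable fun j => p ^ j * ∏ i ∈ range j, nbRatio m b i) :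
    hgFactor m b p = ∑' j, p ^ j * ∏ i ∈ range j, nbRatio m b i := by
  rw [h.tsum_eq_zero_add]
  simp [hgFactor, nbRatio]

end NegativeBinomial

theorem claim_tail_hypergeometric_general (p : ℝ) (hp : 0 < p)
    (m b : ℕ) (hm : 1 ≤ m) (hb : m ≤ b)
    (hconv : p * (1 + ((m : ℝ) - 1) / ((b : ℝ) - m + 1)) < 1) :
    nbTail m p b = nbPMF m p (b + 1) * hgFactor m b p ∧
    1 / (1 - p) ≤ hgFactor m b p ∧
    hgFactor m b p ≤ 1 / (1 - p * (1 + ((m : ℝ) - 1) / ((b : ℝ) - m + 1))) := by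
  have hr1 := one_le_nbRatio hm hb
  have hr0 i : 0 ≤ nbRatio m b i := zero_le_one.trans (hr1 i)
  have hrq := nbRatio_le hm hb
  rw [hgFactor_eq_tsum (summable_pow_mul_prod hp.le hr0 hrq hconv), one_div, one_div]
  exact ⟨nbTail_eq_mul_tsum hm hb p, inv_one_sub_le_tsum_pow_mul_prod hp.le hr1 hrq hconv,
    tsum_pow_mul_prod_le hp.le hr0 hrq hconv⟩

/-- `Pr(X > b) = Pr(X = b+1) · hgFactor`, and
`1/(1-p) ≤ hgFactor ≤ 1/(1 - p(1 + (m-1)/(b-m+1)))` provided the latter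
denominator is positive. -/
theorem claim_tail_hypergeometric (p : ℝ) (hp : 0 < p) (hp1 : p < 1)
    (m b : ℕ) (hm : 1 ≤ m) (hb : m ≤ b)
    (hconv : p * (1 + ((m : ℝ) - 1) / ((b : ℝ) - m + 1)) < 1) :
    nbTail m p b = nbPMF m p (b + 1) * hgFactor m b p ∧
    1 / (1 - p) ≤ hgFactor m b p ∧
    hgFactor m b p ≤ 1 / (1 - p * (1 + ((m : ℝ) - 1) / ((b : ℝ) - m + 1))) :=
  claim_tail_hypergeometric_general p hp m b hm hb hconv
end

section
/- Let $(u_n)$ be a sequence of reals, $F_c$ a continuous CDF, and suppose $n \bar F_c(u_n) \to \tau$ and $n \bar F_c(u_n - 1) \to \tau'$ with $0 < \tau < \tau' < \infty$, where $\bar F_c = 1 - F_c$. Let $(X_i)_{i\ge 1}$ be i.i.d. integer-valued random variables whose CDF $F$ satisfies $F_c(x - 1) \le F(x) \le F_c(x)$ for all $x$, and let $\hat M_n = \max(X_1, \ldots, X_n)$. Then $\limsup_{n\to\infty} \Pr(\hat M_n \le u_n) \le e^{-\tau}$ and $\liminf_{n\to\infty} \Pr(\hat M_n \le u_n) \ge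 e^{-\tau'}$. -/
/-!
With `p n = Pr(X₀ ≤ u n)`, independence and identical distribution give
`Pr(M̂ₙ ≤ u n) = p n ^ n`, and the sandwich gives `Fc (u n - 1) ^ n ≤ p n ^ n ≤ Fc (u n) ^ n`.
Since `n (1 - aₙ) → τ` forces `aₙ ^ n → e^{-τ}`, the outer sequences converge to
`e^{-τ'}` and `e^{-τ}`.
-/

open MeasureTheory ProbabilityTheory Filter Topology

theorem measure_biInter_preimage_eq_pow {Ω ι β : Type*} [MeasurableSpace Ω] [MeasurableSpace β]
    {μ : Measure Ω} {X : ι → Ω → β} (hmeas : ∀ i, Measurable (X i)) (hindep : iIndepFun X μ)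
    {i₀ : ι} (hident : ∀ i, μ.map (X i) = μ.map (X i₀)) {S : Set β} (hS : MeasurableSet S)
    (s : Finset ι) :
    μ (⋂ i ∈ s, X i ⁻¹' S) = μ (X i₀ ⁻¹' S) ^ s.card := by
  have hsame : ∀ i, μ (X i ⁻¹' S) = μ (X i₀ ⁻¹' S) := fun i => by
    rw [← Measure.map_apply (hmeas i) hS, ← Measure.map_apply (hmeas i₀) hS, hident i]
  rw [hindep.meas_biInter fun i _ => ⟨S, hS, rfl⟩, Finset.prod_congr rfl fun i _ => hsame i,
    Finset.prod_const]

theorem tendsto_one_of_tendsto_nat_mul_one_sub {F : ℕ → ℝ} {τ : ℝ}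
    (h : Tendsto (fun n : ℕ => (n : ℝ) * (1 - F n)) atTop (𝓝 τ)) :
    Tendsto F atTop (𝓝 1) := by
  have hsub : Tendsto (fun n : ℕ => (n : ℝ) * (1 - F n) / n) atTop (𝓝 0) :=
    h.div_atTop tendsto_natCast_atTop_atTop
  have hsub' : Tendsto (fun n : ℕ => 1 - F n) atTop (𝓝 0) := by
    refine hsub.congr' ?_
    filter_upwards [eventually_ne_atTop 0] with n hn
    exact mul_div_cancel_left₀ _ (Nat.cast_ne_zero.mpr hn)
  simpa using (tendsto_const_nhds (x := (1 : ℝ))).sub hsub'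

theorem tendsto_pow_exp_neg_of_tendsto_nat_mul_one_sub {F : ℕ → ℝ} {τ : ℝ}
    (h : Tendsto (fun n : ℕ => (n : ℝ) * (1 - F n)) atTop (𝓝 τ)) :
    Tendsto (fun n => F n ^ n) atTop (𝓝 (Real.exp (-τ))) := by
  have h' : Tendsto (fun n : ℕ => (n : ℝ) * (F n - 1)) atTop (𝓝 (-τ)) := by
    simpa only [← mul_neg, neg_sub] using h.neg
  simpa using Real.tendsto_one_add_pow_exp_of_tendsto h'

section LimsupComparison

variable {α β : Type*} [ConditionallyCompleteLinearOrder β] [TopologicalSpace β]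
  [OrderTopology β] {f : Filter α} [f.NeBot] {u v : α → β} {L : β}

theorem limsup_le_of_eventually_le_of_tendsto (hu : IsBoundedUnder (· ≥ ·) f u)
    (huv : u ≤ᶠ[f] v) (hv : Tendsto v f (𝓝 L)) : limsup u f ≤ L :=
  (limsup_le_limsup huv hu.isCoboundedUnder_le hv.isBoundedUnder_le).trans_eq hv.limsup_eq

theorem le_liminf_of_eventually_le_of_tendsto (hu : IsBoundedUnder (· ≤ ·) f u)
    (hvu : v ≤ᶠ[f] u) (hv : Tendsto v f (𝓝 L)) : L ≤ liminf u f :=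
  hv.liminf_eq.symm.trans_le (liminf_le_liminf hvu hv.isBoundedUnder_ge hu.isCoboundedUnder_ge)

end LimsupComparison

theorem claim_anderson_bounds_general {Ω : Type*} [MeasurableSpace Ω] (μ : Measure Ω)
    [IsProbabilityMeasure μ] (X : ℕ → Ω → ℤ) (hmeas : ∀ i, Measurable (X i))
    (hindep : iIndepFun X μ)
    (hident : ∀ i, μ.map (X i) = μ.map (X 0))
    (Fc : ℝ → ℝ)
    (hsand : ∀ x : ℝ, Fc (x - 1) ≤ (μ {ω | (X 0 ω : ℝ) ≤ x}).toReal ∧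
      (μ {ω | (X 0 ω : ℝ) ≤ x}).toReal ≤ Fc x)
    (u : ℕ → ℝ) (τ τ' : ℝ)
    (hlim : Tendsto (fun n : ℕ => (n : ℝ) * (1 - Fc (u n))) atTop (nhds τ))
    (hlim' : Tendsto (fun n : ℕ => (n : ℝ) * (1 - Fc (u n - 1))) atTop (nhds τ')) :
    Filter.limsup
        (fun n : ℕ => (μ {ω | ∀ i ∈ Finset.range n, (X i ω : ℝ) ≤ u n}).toReal) atTop ≤
      Real.exp (-τ) ∧
    Real.exp (-τ') ≤ Filter.liminf
        (fun n : ℕ => (μ {ω | ∀ i ∈ Finset.range n, (X i ω : ℝ) ≤ u n}).toReal) atTop := by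
  set p : ℕ → ℝ := fun n => (μ {ω | (X 0 ω : ℝ) ≤ u n}).toReal
  have hmax : ∀ n, (μ {ω | ∀ i ∈ Finset.range n, (X i ω : ℝ) ≤ u n}).toReal = p n ^ n := by
    intro n
    have hset : {ω | ∀ i ∈ Finset.range n, (X i ω : ℝ) ≤ u n} =
        ⋂ i ∈ Finset.range n, X i ⁻¹' {z : ℤ | (z : ℝ) ≤ u n} := by
      ext; simp
    rw [hset, measure_biInter_preimage_eq_pow hmeas hindep hident trivial, Finset.card_range,
      ENNReal.toReal_pow]
    rfl
  have hpow_nonneg : ∀ n, 0 ≤ p n ^ n := fun n => pow_nonneg ENNReal.toReal_nonneg n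
  have hpow_le_one : ∀ n, p n ^ n ≤ 1 := fun n =>
    pow_le_one₀ ENNReal.toReal_nonneg measureReal_le_one
  have hFc_nonneg : ∀ᶠ n in atTop, 0 ≤ Fc (u n - 1) :=
    (tendsto_one_of_tendsto_nat_mul_one_sub hlim').eventually (eventually_ge_nhds zero_lt_one)
  simp only [hmax]
  constructor
  · refine limsup_le_of_eventually_le_of_tendsto (isBoundedUnder_of ⟨0, hpow_nonneg⟩)
      (Eventually.of_forall fun n => ?_) (tendsto_pow_exp_neg_of_tendsto_nat_mul_one_sub hlim)
    exact pow_le_pow_left₀ ENNReal.toReal_nonneg (hsand (u n)).2 n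
  · refine le_liminf_of_eventually_le_of_tendsto (isBoundedUnder_of ⟨1, hpow_le_one⟩)
      (hFc_nonneg.mono fun n hn => ?_) (tendsto_pow_exp_neg_of_tendsto_nat_mul_one_sub hlim')
    exact pow_le_pow_left₀ hn (hsand (u n)).1 n

/-- Anderson's bounds: for i.i.d. integer-valued `X_i` whose CDF is sandwiched between
shifts of a continuous CDF `F_c`, with `n F̄_c(u_n) → τ` and `n F̄_c(u_n - 1) → τ'`,
`limsup Pr(M̂_n ≤ u_n) ≤ e^{-τ}` and `liminf Pr(M̂_n ≤ u_n) ≥ e^{-τ'}`. -/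
theorem claim_anderson_bounds {Ω : Type*} [MeasurableSpace Ω] (μ : Measure Ω)
    [IsProbabilityMeasure μ] (X : ℕ → Ω → ℤ) (hmeas : ∀ i, Measurable (X i))
    (hindep : iIndepFun X μ)
    (hident : ∀ i, μ.map (X i) = μ.map (X 0))
    (Fc : ℝ → ℝ) (hFc : Continuous Fc)
    (hsand : ∀ x : ℝ, Fc (x - 1) ≤ (μ {ω | (X 0 ω : ℝ) ≤ x}).toReal ∧
      (μ {ω | (X 0 ω : ℝ) ≤ x}).toReal ≤ Fc x)
    (u : ℕ → ℝ) (τ τ' : ℝ) (hτ : 0 < τ) (hττ' : τ < τ')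
    (hlim : Tendsto (fun n : ℕ => (n : ℝ) * (1 - Fc (u n))) atTop (nhds τ))
    (hlim' : Tendsto (fun n : ℕ => (n : ℝ) * (1 - Fc (u n - 1))) atTop (nhds τ')) :
    Filter.limsup
        (fun n : ℕ => (μ {ω | ∀ i ∈ Finset.range n, (X i ω : ℝ) ≤ u n}).toReal) atTop ≤
      Real.exp (-τ) ∧
    Real.exp (-τ') ≤ Filter.liminf
        (fun n : ℕ => (μ {ω | ∀ i ∈ Finset.range n, (X i ω : ℝ) ≤ u n}).toReal) atTop :=
  claim_anderson_bounds_general μ X hmeas hindep hident Fc hsand u τ τ' hlim hlim'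
end

section
/- Let $h \ge 1$ and $n \ge 2$. Consider a complete rooted tree where a packet must traverse each edge, each edge transmission succeeding independently with probability $1-p$ per time slot ($0 < p < 1$). Let $W \sim NB(h-1, p)$ (with $NB(0,p) \equiv 0$), let $Y_1, \ldots, Y_n$ be i.i.d. geometric with $\Pr(Y_i = k) = p^{k-1}(1-p)$ for $k \ge 1$, independent of $W$, and set $M_n^l = W + \max(Y_1, \ldots, Y_n)$. Then $\mathbb{E}[\max(Y_1,\ldots,Y_n)] \ge \log_{1/p} n$, and hence $\mathbb{E}[M_n^l] \ge \frac{h-1}{1-p} + \log_{1/p} n$. -/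
open MeasureTheory Filter intervalIntegral Real Finset


-- step lemma
lemma step_int (p : ℝ) (hp : 0 < p) (hp1 : p < 1) (n t : ℕ) :
    ∫ u in p ^ (t+1)..p ^ t, (∑ j ∈ range n, (1-u)^j) ≤
      (1 - (1 - p ^ t) ^ n) * Real.log (1/p) := by
  have hpt : 0 < p ^ t := pow_pos hp t
  have hle : p ^ (t+1) ≤ p ^ t := pow_le_pow_of_le_one hp.le hp1.le (by omega)
  have hpt1 : p ^ t ≤ 1 := pow_le_one₀ hp.le hp1.le
  have h1 : ∫ u in p ^ (t+1)..p ^ t, (1 - (1 - p ^ t) ^ n) * (1/u)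
      = (1 - (1 - p ^ t) ^ n) * Real.log (1/p) := by
    rw [intervalIntegral.integral_const_mul, integral_one_div]
    · congr 1
      rw [pow_succ]
      congr 1
      rw [div_mul_eq_div_div, div_self (ne_of_gt hpt)]
    · intro h0
      rw [Set.uIcc_of_le hle] at h0
      have := h0.1
      nlinarith [pow_pos hp (t+1)]
  rw [← h1]
  apply intervalIntegral.integral_mono_on hle
  · exact (Continuous.intervalIntegrable (by continuity) _ _)
  · apply ContinuousOn.intervalIntegrable
    apply ContinuousOn.mul continuousOn_const
    apply ContinuousOn.div continuousOn_const continuousOn_id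
    intro x hx
    rw [Set.uIcc_of_le hle] at hx
    simp only [Set.mem_Icc] at hx
    intro h0
    simp only [id] at h0
    nlinarith [hx.1, pow_pos hp (t+1)]
  · intro u hu
    have hu0 : 0 < u := lt_of_lt_of_le (pow_pos hp (t+1)) hu.1
    have hu1 : u ≤ 1 := hu.2.trans hpt1
    have hgeom : ∑ j ∈ range n, (1-u)^j = (1 - (1-u)^n) / u := by
      rw [geom_sum_eq (by intro h; nlinarith [sub_eq_iff_eq_add.mp h]  : (1:ℝ) - u ≠ 1)]
      field_simp
      rw [show (1:ℝ) - u - 1 = -u by ring, div_neg, mul_comm u ((1-u)^n - 1), mul_div_assoc, div_self hu0.ne']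
      ring
    rw [hgeom, mul_one_div]
    have hmono : (1 - p ^ t) ^ n ≤ (1 - u) ^ n :=
      pow_le_pow_left₀ (by linarith [hu.2]) (by linarith [hu.2]) n
    gcongr

lemma telescope_int (p : ℝ) (hp : 0 < p) (hp1 : p < 1) (n : ℕ) : ∀ T : ℕ,
    ∫ u in p ^ T..1, (∑ j ∈ range n, (1-u)^j) ≤
      ∑ t ∈ range T, (1 - (1 - p ^ t) ^ n) * Real.log (1/p) := by
  intro T
  induction T with
  | zero => simp
  | succ T ih =>
    have hint : ∀ a b : ℝ, IntervalIntegrable (fun u => ∑ j ∈ range n, (1-u)^j)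
        MeasureTheory.volume a b := fun a b => (Continuous.intervalIntegrable (by continuity) _ _)
    have hsplit : ∫ u in p ^ (T+1)..1, (∑ j ∈ range n, (1-u)^j)
        = (∫ u in p ^ (T+1)..p ^ T, (∑ j ∈ range n, (1-u)^j))
          + ∫ u in p ^ T..1, (∑ j ∈ range n, (1-u)^j) :=
      (intervalIntegral.integral_add_adjacent_intervals (hint _ _) (hint _ _)).symm
    rw [hsplit, Finset.sum_range_succ]
    have := step_int p hp hp1 n T
    linarith

lemma eval_int (n : ℕ) (a : ℝ) :
    ∫ u in a..1, (∑ j ∈ range n, (1-u)^j) =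
      ∑ j ∈ range n, (1-a)^(j+1) / (j+1) := by
  rw [intervalIntegral.integral_finset_sum]
  · apply Finset.sum_congr rfl
    intro j _
    have := intervalIntegral.integral_comp_sub_left (fun x : ℝ => x ^ j) 1 (a := a) (b := 1)
    simp only [sub_self] at this
    rw [this, integral_pow]
    push_cast
    ring
  · exact fun j _ => (Continuous.intervalIntegrable (by continuity) _ _)

lemma exists_T (p : ℝ) (hp : 0 < p) (hp1 : p < 1) (n : ℕ) (hn : 2 ≤ n) :
    ∃ T : ℕ, Real.log n ≤ ∑ j ∈ range n, (1 - p ^ T)^(j+1) / (j+1) := by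
  have hφ : Continuous fun x : ℝ => ∑ j ∈ range n, (1 - x)^(j+1) / ((j:ℝ)+1) := by
    continuity
  have htend : Filter.Tendsto (fun T : ℕ => ∑ j ∈ range n, (1 - p ^ T)^(j+1) / ((j:ℝ)+1))
      Filter.atTop (nhds (∑ j ∈ range n, (1 - (0:ℝ))^(j+1) / ((j:ℝ)+1))) := by
    exact (hφ.continuousAt.tendsto).comp
      (tendsto_pow_atTop_nhds_zero_of_lt_one hp.le hp1)
  have hval : (∑ j ∈ range n, (1 - (0:ℝ))^(j+1) / ((j:ℝ)+1)) = (harmonic n : ℝ) := by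
    rw [harmonic]
    push_cast
    apply Finset.sum_congr rfl
    intro j _
    rw [sub_zero, one_pow, one_div]
  have hlt : Real.log n < (harmonic n : ℝ) := by
    calc Real.log n < Real.log (n+1) := by
          apply Real.log_lt_log (by positivity)
          linarith
      _ ≤ (harmonic n : ℝ) := by
          have := log_add_one_le_harmonic n
          push_cast at this
          exact this
  rw [hval] at htend
  have := (htend.eventually (eventually_ge_nhds hlt)).exists
  obtain ⟨T, hT⟩ := this
  exact ⟨T, hT⟩

lemma real_main (p : ℝ) (hp : 0 < p) (hp1 : p < 1) (n : ℕ) (hn : 2 ≤ n) :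
    ∃ T : ℕ, Real.logb (1/p) n ≤ ∑ t ∈ range T, (1 - (1 - p ^ t) ^ n) := by
  obtain ⟨T, hT⟩ := exists_T p hp hp1 n hn
  refine ⟨T, ?_⟩
  have hlog : 0 < Real.log (1/p) := Real.log_pos (by rw [lt_div_iff₀ hp]; linarith)
  have h1 : Real.log n ≤ (∑ t ∈ range T, (1 - (1 - p ^ t) ^ n)) * Real.log (1/p) := by
    calc Real.log n ≤ ∑ j ∈ range n, (1 - p ^ T)^(j+1) / (j+1) := hT
      _ = ∫ u in p ^ T..1, (∑ j ∈ range n, (1-u)^j) := (eval_int n _).symm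
      _ ≤ ∑ t ∈ range T, (1 - (1 - p ^ t) ^ n) * Real.log (1/p) :=
          telescope_int p hp hp1 n T
      _ = (∑ t ∈ range T, (1 - (1 - p ^ t) ^ n)) * Real.log (1/p) := by
          rw [Finset.sum_mul]
  rw [Real.logb, div_le_iff₀ hlog]
  exact h1

lemma nat_eq_tsum_indicator (m : ℕ) :
    (m : ENNReal) = ∑' t : ℕ, if t < m then (1 : ENNReal) else 0 := by
  rw [tsum_eq_sum (s := Finset.range m)
    (f := fun t => if t < m then (1 : ENNReal) else 0)
    (by intro t ht; rw [Finset.mem_range] at ht; simp [ht])]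
  rw [Finset.sum_congr rfl (fun t ht => if_pos (Finset.mem_range.mp ht))]
  simp

/-- Lower bound construction: `W ∼ NB(h-1, p)` with `E[W] = (h-1)/(1-p)`, and
`Y_1, …, Y_n` i.i.d. geometric(`p`) whose maximum has CDF `(1 - p^t)^n`.
Then `E[max Y] ≥ log_{1/p} n` and `E[W + max Y] ≥ (h-1)/(1-p) + log_{1/p} n`. -/
theorem claim_lower_bound_split {Ω : Type*} [MeasurableSpace Ω] (μ : Measure Ω)
    [IsProbabilityMeasure μ] (p : ℝ) (hp : 0 < p) (hp1 : p < 1)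
    (h n : ℕ) (hh : 1 ≤ h) (hn : 2 ≤ n)
    (W : Ω → ℕ) (Y : ℕ → Ω → ℕ)
    (hWmeas : Measurable W) (hYmeas : ∀ i, Measurable (Y i))
    (hW : ∫⁻ ω, (W ω : ENNReal) ∂μ = ENNReal.ofReal (((h : ℝ) - 1) / (1 - p)))
    (hmax : ∀ t : ℕ, μ {ω | ∀ i ∈ Finset.range n, Y i ω ≤ t} =
      ENNReal.ofReal ((1 - p ^ t) ^ n)) :
    ENNReal.ofReal (Real.logb (1 / p) n) ≤
      (∫⁻ ω, (((Finset.range n).sup fun i => Y i ω : ℕ) : ENNReal) ∂μ) ∧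
    ENNReal.ofReal (((h : ℝ) - 1) / (1 - p) + Real.logb (1 / p) n) ≤
      ∫⁻ ω, ((W ω + ((Finset.range n).sup fun i => Y i ω) : ℕ) : ENNReal) ∂μ := by
  set M : Ω → ℕ := fun ω => (Finset.range n).sup fun i => Y i ω with hM
  -- measurability of the level sets
  have hsetmeas : ∀ t : ℕ, MeasurableSet {ω | ∀ i ∈ Finset.range n, Y i ω ≤ t} := by
    intro t
    have : {ω | ∀ i ∈ Finset.range n, Y i ω ≤ t} =
        ⋂ i ∈ Finset.range n, (Y i) ⁻¹' (Set.Iic t) := by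
      ext ω; simp [Set.mem_iInter]
    rw [this]
    exact MeasurableSet.biInter (Finset.range n).countable_toSet
      (fun i _ => (hYmeas i) measurableSet_Iic)
  have hcompl : ∀ t : ℕ, {ω | t < M ω} = {ω | ∀ i ∈ Finset.range n, Y i ω ≤ t}ᶜ := by
    intro t
    ext ω
    simp only [Set.mem_setOf_eq, Set.mem_compl_iff, not_forall, hM]
    constructor
    · intro hlt
      by_contra hc
      push_neg at hc
      exact absurd (Finset.sup_le fun i hi => hc i hi) (not_le.mpr hlt)
    · rintro ⟨i, hi, hgt⟩
      exact lt_of_lt_of_le (not_le.mp hgt) (Finset.le_sup (f := fun i => Y i ω) hi)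
  have hμgt : ∀ t : ℕ, μ {ω | t < M ω} = ENNReal.ofReal (1 - (1 - p ^ t) ^ n) := by
    intro t
    have hpt1 : p ^ t ≤ 1 := pow_le_one₀ hp.le hp1.le
    have h0 : (0:ℝ) ≤ (1 - p ^ t) ^ n := pow_nonneg (by linarith) n
    rw [hcompl t, MeasureTheory.prob_compl_eq_one_sub (hsetmeas t), hmax t,
      ENNReal.ofReal_sub _ h0, ENNReal.ofReal_one]
  -- E[M] as a tsum
  have hEM : ∫⁻ ω, (M ω : ENNReal) ∂μ = ∑' t : ℕ, μ {ω | t < M ω} := by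
    have hrw : ∀ ω, (M ω : ENNReal) =
        ∑' t : ℕ, Set.indicator {ω' | t < M ω'} (fun _ => (1:ENNReal)) ω := by
      intro ω
      rw [nat_eq_tsum_indicator (M ω)]
      apply tsum_congr
      intro t
      by_cases hlt : t < M ω <;> simp [Set.indicator, hlt]
    calc ∫⁻ ω, (M ω : ENNReal) ∂μ
        = ∫⁻ ω, ∑' t : ℕ, Set.indicator {ω' | t < M ω'} (fun _ => (1:ENNReal)) ω ∂μ := by
          exact MeasureTheory.lintegral_congr hrw
      _ = ∑' t : ℕ, ∫⁻ ω, Set.indicator {ω' | t < M ω'} (fun _ => (1:ENNReal)) ω ∂μ := by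
          apply MeasureTheory.lintegral_tsum
          intro t
          exact (measurable_const.indicator ((hcompl t) ▸ (hsetmeas t).compl)).aemeasurable
      _ = ∑' t : ℕ, μ {ω | t < M ω} := by
          apply tsum_congr
          intro t
          exact MeasureTheory.lintegral_indicator_one ((hcompl t) ▸ (hsetmeas t).compl)
  -- first inequality
  obtain ⟨T, hT⟩ := real_main p hp hp1 n hn
  have hfirst : ENNReal.ofReal (Real.logb (1 / p) n) ≤ ∫⁻ ω, (M ω : ENNReal) ∂μ := by
    rw [hEM]
    calc ENNReal.ofReal (Real.logb (1 / p) n)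
        ≤ ENNReal.ofReal (∑ t ∈ Finset.range T, (1 - (1 - p ^ t) ^ n)) :=
          ENNReal.ofReal_le_ofReal hT
      _ = ∑ t ∈ Finset.range T, ENNReal.ofReal (1 - (1 - p ^ t) ^ n) := by
          apply ENNReal.ofReal_sum_of_nonneg
          intro t _
          have hpt1 : p ^ t ≤ 1 := pow_le_one₀ hp.le hp1.le
          have hptnn : (0:ℝ) ≤ p ^ t := pow_nonneg hp.le t
          have : (1 - p ^ t) ^ n ≤ 1 := pow_le_one₀ (by linarith) (by linarith)
          linarith
      _ = ∑ t ∈ Finset.range T, μ {ω | t < M ω} := by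
          exact Finset.sum_congr rfl fun t _ => (hμgt t).symm
      _ ≤ ∑' t : ℕ, μ {ω | t < M ω} := ENNReal.sum_le_tsum _
  refine ⟨hfirst, ?_⟩
  have hadd : ∫⁻ ω, ((W ω + M ω : ℕ) : ENNReal) ∂μ
      = (∫⁻ ω, (W ω : ENNReal) ∂μ) + ∫⁻ ω, (M ω : ENNReal) ∂μ := by
    have hcast : ∀ ω, ((W ω + M ω : ℕ) : ENNReal) = (W ω : ENNReal) + (M ω : ENNReal) := by
      intro ω; push_cast; rfl
    have hWm : Measurable fun ω => (W ω : ENNReal) :=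
      (measurable_from_nat (f := fun k : ℕ => (k : ENNReal))).comp hWmeas
    rw [MeasureTheory.lintegral_congr hcast, MeasureTheory.lintegral_add_left hWm]
  rw [hadd, hW]
  calc ENNReal.ofReal (((h : ℝ) - 1) / (1 - p) + Real.logb (1 / p) n)
      ≤ ENNReal.ofReal (((h : ℝ) - 1) / (1 - p)) + ENNReal.ofReal (Real.logb (1 / p) n) :=
        ENNReal.ofReal_add_le
    _ ≤ ENNReal.ofReal (((h : ℝ) - 1) / (1 - p)) + ∫⁻ ω, (M ω : ENNReal) ∂μ := by
        exact add_le_add le_rfl hfirst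
end

section
/- Let $0 < p < 1$, $n \ge 2$, and let $T_1, \ldots, T_n$ denote the arrival times of a single packet at the $n$ leaves of a complete binary tree of depth $\log_2 n$ with independent per-edge geometric($p$) delays (each $T_i \sim NB(\log_2 n, p)$, but the $T_i$ are correlated through shared edges). Let $\hat T_1, \ldots, \hat T_n$ be i.i.d. $NB(\log_2 n, p)$. Then $\mathbb{E}[\max(T_1, \ldots, T_n)] \le \mathbb{E}[\max(\hat T_1, \ldots, \hat T_n)]$. -/
open MeasureTheory ProbabilityTheory Filter
open scoped ENNReal

/-!
Both maxima are ℕ-valued, so it suffices to compare their distribution functions. For the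
`n = 2^N` i.i.d. paths, `P(max T̂ ≤ t) = H_N(t)^n` with `H_N` the distribution function of a sum
of `N` edge delays. For the tree, `M_{2n} = max (W₁ + M⁽¹⁾, W₂ + M⁽²⁾)` with the two halves
independent, so `P(M_{2n} ≤ t) = P(W₁ + M⁽¹⁾ ≤ t) P(W₂ + M⁽²⁾ ≤ t)`. Conditioning on the top
edge and using the induction hypothesis `P(M_n ≤ s) ≥ H_N(s)^n`, each factor is at least
`∑_w P(W = w) H_N(t - w)^n ≥ (∑_w P(W = w) H_N(t - w))^n = H_{N+1}(t)^n` by the power-mean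
inequality, whence `P(M_{2n} ≤ t) ≥ H_{N+1}(t)^{2n}`.
-/

theorem ENNReal.pow_sum_mul_le_sum_mul_pow {ι : Type*} (s : Finset ι) (w f : ι → ℝ≥0∞)
    (hw : ∑ i ∈ s, w i ≤ 1) {n : ℕ} (hn : n ≠ 0) :
    (∑ i ∈ s, w i * f i) ^ n ≤ ∑ i ∈ s, w i * f i ^ n := by
  have hn₁ : (1 : ℝ) ≤ n := Nat.one_le_cast.2 (Nat.one_le_iff_ne_zero.2 hn)
  have holder := ENNReal.inner_le_weight_mul_Lp_of_nonneg s hn₁ w f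
  simp only [ENNReal.rpow_natCast] at holder
  have hw' : (∑ i ∈ s, w i) ^ (1 - (n : ℝ)⁻¹) ≤ 1 :=
    ENNReal.rpow_le_one hw (sub_nonneg.2 (inv_le_one_of_one_le₀ hn₁))
  calc (∑ i ∈ s, w i * f i) ^ n
      ≤ ((∑ i ∈ s, w i * f i ^ n) ^ (n : ℝ)⁻¹) ^ n :=
        pow_le_pow_left₀ bot_le (holder.trans (mul_le_of_le_one_left bot_le hw')) n
    _ = ∑ i ∈ s, w i * f i ^ n := ENNReal.rpow_inv_natCast_pow hn _

theorem measurable_finset_sup_apply {Ω ι α : Type*} {m : MeasurableSpace Ω} [MeasurableSpace α]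
    [SemilatticeSup α] [OrderBot α] [MeasurableSup₂ α] {s : Finset ι} {R : ι → Ω → α}
    (hR : ∀ i ∈ s, Measurable (R i)) : Measurable fun ω => s.sup fun i => R i ω := by
  simp only [← Finset.sup_apply]
  exact Finset.sup_induction measurable_const (fun f hf g hg => hf.sup hg) hR

section Subfamily

variable {Ω ι β : Type*} [MeasurableSpace β] {X : ι → Ω → β} {S T : Set ι}

abbrev subfamilySigma (X : ι → Ω → β) (S : Set ι) : MeasurableSpace Ω :=
  ⨆ i ∈ S, MeasurableSpace.comap (X i) inferInstance

theorem subfamilySigma_mono (hST : S ⊆ T) : subfamilySigma X S ≤ subfamilySigma X T :=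
  biSup_mono hST

theorem measurable_subfamilySigma {i : ι} (hi : i ∈ S) : Measurable[subfamilySigma X S] (X i) :=
  measurable_iff_comap_le.2 (le_biSup (fun i => MeasurableSpace.comap (X i) inferInstance) hi)

theorem measurable_subfamilySigma_sum [AddCommMonoid β] [MeasurableAdd₂ β] {v : ℕ → ι} {M : ℕ}
    (hv : ∀ k < M, v k ∈ S) :
    Measurable[subfamilySigma X S] fun ω => ∑ k ∈ Finset.range M, X (v k) ω :=
  Finset.measurable_sum _ fun k hk => measurable_subfamilySigma (hv k (Finset.mem_range.1 hk))

variable [MeasurableSpace Ω]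

theorem subfamilySigma_le (hX : ∀ i, Measurable (X i)) (S : Set ι) :
    subfamilySigma X S ≤ ‹MeasurableSpace Ω› :=
  iSup₂_le fun i _ => (hX i).comap_le

theorem ProbabilityTheory.iIndepFun.indepFun_of_disjoint {μ : Measure Ω} (hind : iIndepFun X μ)
    (hX : ∀ i, Measurable (X i)) (hST : Disjoint S T) {γ δ : Type*} [MeasurableSpace γ]
    [MeasurableSpace δ] {Y : Ω → γ} {Z : Ω → δ} (hY : Measurable[subfamilySigma X S] Y)
    (hZ : Measurable[subfamilySigma X T] Z) : IndepFun Y Z μ := by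
  rw [IndepFun_iff_Indep]
  exact indep_of_indep_of_le_right (indep_of_indep_of_le_left
    (indep_iSup_of_disjoint (fun i => (hX i).comap_le) hind.iIndep hST) hY.comap_le) hZ.comap_le

end Subfamily

section NatValued

variable {Ω : Type*} [MeasurableSpace Ω] {μ : Measure Ω}

theorem ProbabilityTheory.IndepFun.measure_add_le_eq_sum {V Y : Ω → ℕ} (h : IndepFun V Y μ)
    (hV : Measurable V) (hY : Measurable Y) (t : ℕ) :
    μ {ω | V ω + Y ω ≤ t} =
      ∑ w ∈ Finset.range (t + 1), μ {ω | V ω = w} * μ {ω | Y ω ≤ t - w} := by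
  have hsplit : {ω | V ω + Y ω ≤ t} =
      ⋃ w ∈ Finset.range (t + 1), (V ⁻¹' {w} ∩ Y ⁻¹' Set.Iic (t - w)) := by
    ext ω
    simp only [Set.mem_ofPred_eq, Set.mem_iUnion, Set.mem_inter_iff, Set.mem_preimage,
      Set.mem_singleton_iff, Set.mem_Iic, Finset.mem_range, exists_prop]
    exact ⟨fun hω => ⟨V ω, by omega, rfl, by omega⟩, fun ⟨w, _, hw, hω⟩ => by omega⟩
  rw [hsplit, measure_biUnion_finset]
  · exact Finset.sum_congr rfl fun w _ =>
      h.measure_inter_preimage_eq_mul _ _ (measurableSet_singleton w) measurableSet_Iic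
  · intro w _ w' _ hww'
    exact Set.disjoint_left.2 fun ω hω hω' => hww' (hω.1.symm.trans hω'.1)
  · exact fun w _ => (hV (measurableSet_singleton w)).inter (hY measurableSet_Iic)

theorem ProbabilityTheory.IndepFun.measure_max_le_eq_mul {Y Z : Ω → ℕ} (h : IndepFun Y Z μ)
    (t : ℕ) : μ {ω | max (Y ω) (Z ω) ≤ t} = μ {ω | Y ω ≤ t} * μ {ω | Z ω ≤ t} := by
  simp only [max_le_iff, Set.ofPred_and]
  exact h.measure_inter_preimage_eq_mul _ _ measurableSet_Iic measurableSet_Iic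

theorem lintegral_natCast_eq_tsum_measure_lt {Z : Ω → ℕ} (hZ : Measurable Z) :
    ∫⁻ ω, (Z ω : ℝ≥0∞) ∂μ = ∑' n : ℕ, μ {ω | n < Z ω} := by
  have hmeas (n : ℕ) : MeasurableSet {ω | n < Z ω} := hZ measurableSet_Ioi
  have hcount (ω : Ω) : (Z ω : ℝ≥0∞) = ∑' n : ℕ, {ω | n < Z ω}.indicator 1 ω := by
    have hone : ∀ n ∈ Finset.range (Z ω), {ω | n < Z ω}.indicator 1 ω = (1 : ℝ≥0∞) :=
      fun n hn => Set.indicator_of_mem (Finset.mem_range.1 hn) 1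
    rw [tsum_eq_sum (s := Finset.range (Z ω)) fun n hn => by simpa using hn,
      Finset.sum_congr rfl hone]
    simp
  simp_rw [hcount]
  rw [lintegral_tsum fun n => (measurable_one.indicator (hmeas n)).aemeasurable]
  simp_rw [lintegral_indicator_one (hmeas _)]

variable [IsProbabilityMeasure μ]

theorem lintegral_natCast_le_of_forall_measure_le {Y Z : Ω → ℕ} (hY : Measurable Y)
    (hZ : Measurable Z) (h : ∀ n, μ {ω | Z ω ≤ n} ≤ μ {ω | Y ω ≤ n}) :
    ∫⁻ ω, (Y ω : ℝ≥0∞) ∂μ ≤ ∫⁻ ω, (Z ω : ℝ≥0∞) ∂μ := by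
  rw [lintegral_natCast_eq_tsum_measure_lt hY, lintegral_natCast_eq_tsum_measure_lt hZ]
  refine ENNReal.tsum_le_tsum fun n => ?_
  have hcompl (V : Ω → ℕ) : {ω | n < V ω} = {ω | V ω ≤ n}ᶜ := by ext; simp
  rw [hcompl, hcompl, prob_compl_eq_one_sub (s := {ω | Y ω ≤ n}) (hY measurableSet_Iic),
    prob_compl_eq_one_sub (s := {ω | Z ω ≤ n}) (hZ measurableSet_Iic)]
  exact tsub_le_tsub_left (h n) 1

theorem measure_eq_eq_of_forall_one_le {Y Z : Ω → ℕ} (hY : Measurable Y) (hZ : Measurable Z)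
    (h : ∀ k, 1 ≤ k → μ {ω | Y ω = k} = μ {ω | Z ω = k}) (k : ℕ) :
    μ {ω | Y ω = k} = μ {ω | Z ω = k} := by
  rcases Nat.eq_zero_or_pos k with rfl | hk
  · have htotal {V : Ω → ℕ} (hV : Measurable V) :
        μ {ω | V ω = 0} + ∑' k, μ {ω | V ω = k + 1} = 1 := by
      have h := tsum_measure_preimage_singleton (μ := μ) Set.countable_univ
        fun k _ => hV (measurableSet_singleton k)
      rwa [tsum_univ (f := fun k => μ (V ⁻¹' {k})), Set.preimage_univ, measure_univ,
        tsum_eq_zero_add' ENNReal.summable] at h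
    have htail : ∑' k, μ {ω | Y ω = k + 1} = ∑' k, μ {ω | Z ω = k + 1} :=
      tsum_congr fun k => h (k + 1) k.succ_pos
    have hfin : ∑' k, μ {ω | Z ω = k + 1} ≠ ∞ :=
      ne_top_of_le_ne_top ENNReal.one_ne_top (htotal hZ ▸ le_add_self)
    have h := (htotal hY).trans (htotal hZ).symm
    rwa [htail, ENNReal.add_left_inj hfin] at h
  · exact h k hk

theorem sum_measure_eq_le_one {V : Ω → ℕ} (hV : Measurable V) (s : Finset ℕ) :
    ∑ w ∈ s, μ {ω | V ω = w} ≤ 1 :=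
  (sum_measure_preimage_singleton s fun w _ => hV (measurableSet_singleton w)).trans_le prob_le_one

end NatValued

noncomputable def iidSumCDF (q : ℕ → ℝ≥0∞) : ℕ → ℕ → ℝ≥0∞
  | 0, _ => 1
  | M + 1, t => ∑ w ∈ Finset.range (t + 1), q w * iidSumCDF q M (t - w)

section IndependentPaths

variable {Ω : Type*} [MeasurableSpace Ω] {μ : Measure Ω} [IsProbabilityMeasure μ]

theorem ProbabilityTheory.iIndepFun.measure_sum_le_eq_iidSumCDF {ι : Type*} {X : ι → Ω → ℕ}
    {q : ℕ → ℝ≥0∞} (hind : iIndepFun X μ) (hX : ∀ i, Measurable (X i))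
    (hq : ∀ i w, μ {ω | X i ω = w} = q w) {v : ℕ → ι} (hv : v.Injective) (M t : ℕ) :
    μ {ω | ∑ k ∈ Finset.range M, X (v k) ω ≤ t} = iidSumCDF q M t := by
  induction M generalizing t with
  | zero => simp [iidSumCDF]
  | succ M ih =>
    have hrest : Measurable[subfamilySigma X {v M}ᶜ] fun ω => ∑ k ∈ Finset.range M, X (v k) ω :=
      measurable_subfamilySigma_sum fun k hk => hv.ne hk.ne
    have hindep := hind.indepFun_of_disjoint hX disjoint_compl_right
      (measurable_subfamilySigma (Set.mem_singleton (v M))) hrest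
    simp only [Finset.sum_range_succ_comm]
    rw [hindep.measure_add_le_eq_sum (hX _) (hrest.mono (subfamilySigma_le hX _) le_rfl)]
    simp only [hq, ih, iidSumCDF]

theorem ProbabilityTheory.iIndepFun.measure_sup_le_eq_prod {ι κ : Type*} {Y : ι × κ → Ω → ℕ}
    (hind : iIndepFun Y μ) (hY : ∀ x, Measurable (Y x)) {R : ι → Ω → ℕ}
    (hR : ∀ i, Measurable[subfamilySigma Y {x | x.1 = i}] (R i)) (s : Finset ι) (t : ℕ) :
    μ {ω | s.sup (fun i => R i ω) ≤ t} = ∏ i ∈ s, μ {ω | R i ω ≤ t} := by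
  classical
  induction s using Finset.induction with
  | empty => simp
  | insert a s ha ih =>
    have hrest : Measurable[subfamilySigma Y {x | x.1 ∈ s}] fun ω => s.sup fun i => R i ω :=
      measurable_finset_sup_apply fun i hi =>
        (hR i).mono (subfamilySigma_mono fun x (hx : x.1 = i) => show x.1 ∈ s from hx ▸ hi) le_rfl
    have hdisj : Disjoint {x : ι × κ | x.1 = a} {x | x.1 ∈ s} :=
      Set.disjoint_left.2 fun x hxa hxs => ha (hxa ▸ hxs)
    simp only [Finset.sup_insert, Finset.prod_insert ha]
    rw [(hind.indepFun_of_disjoint hY hdisj (hR a) hrest).measure_max_le_eq_mul, ih]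

end IndependentPaths

-- Heap indexing: the children of node `c` are `2c` and `2c + 1`, and `X v` is the delay on the
-- edge above `v`.
def descendants (c : ℕ) : Set ℕ := {v | ∃ a, v / 2 ^ (a + 1) = c}

theorem mem_insert_descendants {c v : ℕ} : v ∈ insert c (descendants c) ↔ ∃ a, v / 2 ^ a = c := by
  constructor
  · rintro (rfl | ⟨a, ha⟩)
    exacts [⟨0, by simp⟩, ⟨a + 1, ha⟩]
  · rintro ⟨_ | a, ha⟩
    exacts [Or.inl (by simpa using ha), Or.inr ⟨a, ha⟩]

theorem insert_descendants_subset {c d : ℕ} (hd : d / 2 = c) :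
    insert d (descendants d) ⊆ descendants c := by
  intro v hv
  obtain ⟨a, ha⟩ := mem_insert_descendants.1 hv
  exact ⟨a, by rw [pow_succ, ← Nat.div_div_eq_div_mul, ha, hd]⟩

theorem self_notMem_descendants {c : ℕ} (hc : 0 < c) : c ∉ descendants c :=
  fun ⟨a, ha⟩ => (Nat.div_lt_self hc (Nat.one_lt_two_pow a.succ_ne_zero)).ne ha

theorem disjoint_insert_descendants_children {r : ℕ} (hr : 0 < r) :
    Disjoint (insert (2 * r) (descendants (2 * r)))
      (insert (2 * r + 1) (descendants (2 * r + 1))) := by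
  rw [Set.disjoint_left]
  intro v hv hv'
  obtain ⟨a, ha⟩ := mem_insert_descendants.1 hv
  obtain ⟨b, hb⟩ := mem_insert_descendants.1 hv'
  rcases le_or_gt a b with hab | hab
  · have : v / 2 ^ b = 2 * r / 2 ^ (b - a) := by
      rw [← ha, Nat.div_div_eq_div_mul, ← pow_add, Nat.add_sub_cancel' hab]
    have := Nat.div_le_self (2 * r) (2 ^ (b - a))
    omega
  · have : v / 2 ^ a = (2 * r + 1) / 2 ^ (a - b) := by
      rw [← hb, Nat.div_div_eq_div_mul, ← pow_add, Nat.add_sub_cancel' hab.le]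
    have : (2 * r + 1) / 2 ^ (a - b) ≤ (2 * r + 1) / 2 :=
      Nat.div_le_div_left (Nat.le_self_pow (by omega) 2) two_pos
    omega

section Tree

variable {Ω : Type*}

def treeMax (X : ℕ → Ω → ℕ) : ℕ → ℕ → Ω → ℕ
  | 0, _, _ => 0
  | N + 1, c, ω =>
    max (X (2 * c) ω + treeMax X N (2 * c) ω) (X (2 * c + 1) ω + treeMax X N (2 * c + 1) ω)

theorem treeMax_eq_sup (X : ℕ → Ω → ℕ) (N c : ℕ) (ω : Ω) :
    treeMax X N c ω = (Finset.Ico (c * 2 ^ N) ((c + 1) * 2 ^ N)).sup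
      fun i => ∑ k ∈ Finset.range N, X (i / 2 ^ k) ω := by
  induction N generalizing c with
  | zero => simp [treeMax]
  | succ N ih =>
    have hblock (d : ℕ) : treeMax X N d ω + X d ω = (Finset.Ico (d * 2 ^ N) ((d + 1) * 2 ^ N)).sup
        fun i => ∑ k ∈ Finset.range (N + 1), X (i / 2 ^ k) ω := by
      rw [ih, Finset.sup_add ⟨d * 2 ^ N, by simp⟩]
      refine Finset.sup_congr rfl fun i hi => ?_
      rw [Finset.mem_Ico] at hi
      rw [Finset.sum_range_succ, Nat.div_eq_of_lt_le hi.1 hi.2]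
    have hsplit : Finset.Ico (c * 2 ^ (N + 1)) ((c + 1) * 2 ^ (N + 1)) =
        Finset.Ico (2 * c * 2 ^ N) ((2 * c + 1) * 2 ^ N) ∪
          Finset.Ico ((2 * c + 1) * 2 ^ N) ((2 * c + 1 + 1) * 2 ^ N) := by
      rw [Finset.Ico_union_Ico_eq_Ico (by gcongr; omega) (by gcongr; omega)]
      congr 1 <;> ring
    rw [hsplit, Finset.sup_union, ← hblock, ← hblock, treeMax, add_comm (X _ ω),
      add_comm (X _ ω)]

theorem measurable_treeMax {X : ℕ → Ω → ℕ} (N c : ℕ) :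
    Measurable[subfamilySigma X (descendants c)] (treeMax X N c) := by
  induction N generalizing c with
  | zero => exact measurable_const
  | succ N ih =>
    have hchild (d : ℕ) (hd : d / 2 = c) :
        Measurable[subfamilySigma X (descendants c)] fun ω => X d ω + treeMax X N d ω :=
      ((measurable_subfamilySigma (Set.mem_insert d _)).add
        ((ih d).mono (subfamilySigma_mono (Set.subset_insert d _)) le_rfl)).mono
        (subfamilySigma_mono (insert_descendants_subset hd)) le_rfl
    exact (hchild (2 * c) (by omega)).max (hchild (2 * c + 1) (by omega))

variable [MeasurableSpace Ω] {μ : Measure Ω} [IsProbabilityMeasure μ] {q : ℕ → ℝ≥0∞}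
  {X : ℕ → Ω → ℕ} (hind : iIndepFun X μ) (hX : ∀ v, Measurable (X v))
  (hq : ∀ v w, μ {ω | X v ω = w} = q w)
include hind hX hq

theorem iidSumCDF_succ_pow_le_measure_add_treeMax_le {N d : ℕ} (hd : 0 < d)
    (ih : ∀ t, iidSumCDF q N t ^ 2 ^ N ≤ μ {ω | treeMax X N d ω ≤ t}) (t : ℕ) :
    iidSumCDF q (N + 1) t ^ 2 ^ N ≤ μ {ω | X d ω + treeMax X N d ω ≤ t} := by
  have hindep : IndepFun (X d) (treeMax X N d) μ :=
    hind.indepFun_of_disjoint hX (Set.disjoint_singleton_left.2 (self_notMem_descendants hd))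
      (measurable_subfamilySigma rfl) (measurable_treeMax N d)
  have hweights : ∑ w ∈ Finset.range (t + 1), q w ≤ 1 := by
    simpa only [hq] using sum_measure_eq_le_one (μ := μ) (hX d) (Finset.range (t + 1))
  calc iidSumCDF q (N + 1) t ^ 2 ^ N
      ≤ ∑ w ∈ Finset.range (t + 1), q w * iidSumCDF q N (t - w) ^ 2 ^ N :=
        ENNReal.pow_sum_mul_le_sum_mul_pow _ _ _ hweights (pow_ne_zero N two_ne_zero)
    _ ≤ ∑ w ∈ Finset.range (t + 1), q w * μ {ω | treeMax X N d ω ≤ t - w} := by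
        gcongr with w
        exact ih _
    _ = μ {ω | X d ω + treeMax X N d ω ≤ t} := by
        rw [hindep.measure_add_le_eq_sum (hX d)
          ((measurable_treeMax N d).mono (subfamilySigma_le hX _) le_rfl)]
        simp only [hq]

theorem iidSumCDF_pow_le_measure_treeMax_le (N : ℕ) {c : ℕ} (hc : 0 < c) (t : ℕ) :
    iidSumCDF q N t ^ 2 ^ N ≤ μ {ω | treeMax X N c ω ≤ t} := by
  induction N generalizing c t with
  | zero => simp [treeMax, iidSumCDF]
  | succ N ih =>
    have hchild (d : ℕ) :
        Measurable[subfamilySigma X (insert d (descendants d))] fun ω => X d ω + treeMax X N d ω :=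
      (measurable_subfamilySigma (Set.mem_insert d _)).add
        ((measurable_treeMax N d).mono (subfamilySigma_mono (Set.subset_insert d _)) le_rfl)
    have hindep := hind.indepFun_of_disjoint hX (disjoint_insert_descendants_children hc)
      (hchild (2 * c)) (hchild (2 * c + 1))
    calc iidSumCDF q (N + 1) t ^ 2 ^ (N + 1)
        = iidSumCDF q (N + 1) t ^ 2 ^ N * iidSumCDF q (N + 1) t ^ 2 ^ N := by ring
      _ ≤ μ {ω | X (2 * c) ω + treeMax X N (2 * c) ω ≤ t} *
            μ {ω | X (2 * c + 1) ω + treeMax X N (2 * c + 1) ω ≤ t} := by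
        gcongr <;> exact iidSumCDF_succ_pow_le_measure_add_treeMax_le hind hX hq (by omega)
          (ih (by omega)) t
      _ = μ {ω | treeMax X (N + 1) c ω ≤ t} := (hindep.measure_max_le_eq_mul t).symm

end Tree

theorem lintegral_treeMax_le_lintegral_sup_iid {Ω : Type*} [MeasurableSpace Ω] {μ : Measure Ω}
    [IsProbabilityMeasure μ] {q : ℕ → ℝ≥0∞} {X : ℕ → Ω → ℕ} {Y : ℕ × ℕ → Ω → ℕ}
    (hX : ∀ v, Measurable (X v)) (hY : ∀ x, Measurable (Y x))
    (hXind : iIndepFun X μ) (hYind : iIndepFun Y μ)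
    (hXq : ∀ v w, μ {ω | X v ω = w} = q w) (hYq : ∀ x w, μ {ω | Y x ω = w} = q w) (N : ℕ) :
    ∫⁻ ω, (treeMax X N 1 ω : ℝ≥0∞) ∂μ ≤
      ∫⁻ ω, ((Finset.Ico (2 ^ N) (2 ^ (N + 1))).sup
        fun i => ∑ k ∈ Finset.range N, Y (i, k) ω : ℕ) ∂μ := by
  have hpath (i : ℕ) : Measurable[subfamilySigma Y {x | x.1 = i}]
      fun ω => ∑ k ∈ Finset.range N, Y (i, k) ω :=
    measurable_subfamilySigma_sum fun _ _ => rfl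
  refine lintegral_natCast_le_of_forall_measure_le
    ((measurable_treeMax N 1).mono (subfamilySigma_le hX _) le_rfl)
    (measurable_finset_sup_apply fun i _ => (hpath i).mono (subfamilySigma_le hY _) le_rfl)
    fun t => ?_
  calc μ {ω | ((Finset.Ico (2 ^ N) (2 ^ (N + 1))).sup
          fun i => ∑ k ∈ Finset.range N, Y (i, k) ω) ≤ t}
      = ∏ i ∈ Finset.Ico (2 ^ N) (2 ^ (N + 1)), μ {ω | ∑ k ∈ Finset.range N, Y (i, k) ω ≤ t} :=
        hYind.measure_sup_le_eq_prod hY hpath _ t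
    _ = iidSumCDF q N t ^ 2 ^ N := by
        rw [Finset.prod_congr rfl fun i _ => hYind.measure_sum_le_eq_iidSumCDF hY hYq
          (fun k l h => (Prod.ext_iff.1 h).2) N t, Finset.prod_const, Nat.card_Ico, pow_succ]
        congr 1
        omega
    _ ≤ μ {ω | treeMax X N 1 ω ≤ t} := iidSumCDF_pow_le_measure_treeMax_le hXind hX hXq N one_pos t

theorem claim_tree_upper_bound_general {Ω : Type*} [MeasurableSpace Ω] (μ : Measure Ω)
    [IsProbabilityMeasure μ] (p : ℝ)
    (N : ℕ)
    (G : ℕ → Ω → ℕ) (Ghat : ℕ → ℕ → Ω → ℕ)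
    (hGmeas : ∀ v, Measurable (G v)) (hGhatmeas : ∀ i k, Measurable (Ghat i k))
    (hGindep : iIndepFun G μ)
    (hGhatindep : iIndepFun
      (fun q : ℕ × ℕ => Ghat q.1 q.2) μ)
    (hGgeom : ∀ v, ∀ k : ℕ, 1 ≤ k →
      μ {ω | G v ω = k} = ENNReal.ofReal (p ^ (k - 1) * (1 - p)))
    (hGhatgeom : ∀ i j, ∀ k : ℕ, 1 ≤ k →
      μ {ω | Ghat i j ω = k} = ENNReal.ofReal (p ^ (k - 1) * (1 - p))) :
    (∫⁻ ω, (((Finset.Ico (2 ^ N) (2 ^ (N + 1))).sup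
        fun i => ∑ k ∈ Finset.range N, G (i / 2 ^ k) ω : ℕ) : ENNReal) ∂μ) ≤
    ∫⁻ ω, (((Finset.Ico (2 ^ N) (2 ^ (N + 1))).sup
        fun i => ∑ k ∈ Finset.range N, Ghat i k ω : ℕ) : ENNReal) ∂μ := by
  have hGlaw (v w : ℕ) : μ {ω | G v ω = w} = μ {ω | G 0 ω = w} :=
    measure_eq_eq_of_forall_one_le (hGmeas v) (hGmeas 0)
      (fun k hk => by rw [hGgeom v k hk, hGgeom 0 k hk]) w
  have hGhatlaw (x : ℕ × ℕ) (w : ℕ) : μ {ω | Ghat x.1 x.2 ω = w} = μ {ω | G 0 ω = w} :=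
    measure_eq_eq_of_forall_one_le (hGhatmeas x.1 x.2) (hGmeas 0)
      (fun k hk => by rw [hGhatgeom x.1 x.2 k hk, hGgeom 0 k hk]) w
  have htree (ω : Ω) : treeMax G N 1 ω = (Finset.Ico (2 ^ N) (2 ^ (N + 1))).sup
      fun i => ∑ k ∈ Finset.range N, G (i / 2 ^ k) ω := by
    rw [treeMax_eq_sup, one_mul, one_add_one_eq_two, ← pow_succ']
  simp_rw [← htree]
  exact lintegral_treeMax_le_lintegral_sup_iid hGmeas (fun x => hGhatmeas x.1 x.2) hGindep
    hGhatindep hGlaw hGhatlaw N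

/-- Complete binary tree with `2^N` leaves (heap indexing: leaf `i ∈ [2^N, 2^{N+1})`,
the edges on the root-to-leaf path are those above nodes `i / 2^k`, `k < N`).
Edge delays `G v` are i.i.d. geometric(`p`); `T_i = ∑_{k<N} G (i / 2^k)` is the leaf
arrival time. `Ĝ i k` are fully i.i.d. geometric(`p`), giving i.i.d. path delays
`T̂_i = ∑_{k<N} Ĝ i k`. Then `E[max_i T_i] ≤ E[max_i T̂_i]`. -/
theorem claim_tree_upper_bound {Ω : Type*} [MeasurableSpace Ω] (μ : Measure Ω)
    [IsProbabilityMeasure μ] (p : ℝ) (hp : 0 < p) (hp1 : p < 1)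
    (N : ℕ) (hN : 1 ≤ N)
    (G : ℕ → Ω → ℕ) (Ghat : ℕ → ℕ → Ω → ℕ)
    (hGmeas : ∀ v, Measurable (G v)) (hGhatmeas : ∀ i k, Measurable (Ghat i k))
    (hGindep : iIndepFun G μ)
    (hGhatindep : iIndepFun
      (fun q : ℕ × ℕ => Ghat q.1 q.2) μ)
    (hGgeom : ∀ v, ∀ k : ℕ, 1 ≤ k →
      μ {ω | G v ω = k} = ENNReal.ofReal (p ^ (k - 1) * (1 - p)))
    (hGhatgeom : ∀ i j, ∀ k : ℕ, 1 ≤ k →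
      μ {ω | Ghat i j ω = k} = ENNReal.ofReal (p ^ (k - 1) * (1 - p))) :
    (∫⁻ ω, (((Finset.Ico (2 ^ N) (2 ^ (N + 1))).sup
        fun i => ∑ k ∈ Finset.range N, G (i / 2 ^ k) ω : ℕ) : ENNReal) ∂μ) ≤
    ∫⁻ ω, (((Finset.Ico (2 ^ N) (2 ^ (N + 1))).sup
        fun i => ∑ k ∈ Finset.range N, Ghat i k ω : ℕ) : ENNReal) ∂μ :=
  claim_tree_upper_bound_general μ p N G Ghat hGmeas hGhatmeas hGindep hGhatindep hGgeom hGhatgeom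
end
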